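/- arXiv:2206.12550 — 3 statements merged into one kernel-verified Lean document; each statement's English description precedes it below -/
import Mathlib

section
/- Let 0 < lambda < 1, 0 < eps < 1 with lambda + eps != 1, and let delta be a positive integer. Define beta = delta + eps/(1-eps) + (1-eps)(1-lambda)/((1-eps+lambda*eps)*lambda) + ((1-lambda)^delta * eps^delta)/(1-eps+lambda*eps). Define P_j = (1/beta)*(1 - (1-lambda)^j * eps^j) for 1 <= j <= delta, and P_j = (lambda*eps^{j-delta+1} - lambda*eps^delta*(1-lambda)^j + (1-eps)*(1-lambda)^delta*eps^j - (1-eps)*(1-lambda)^{j-delta+1})/(beta*(eps+lambda-1)) for j > delta. Then sum_{j=1}^infinity P_j = 1. -/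
set_option maxHeartbeats 1000000 in
private lemma aoi_aux (lam eps d A E : ℝ)
    (h1e : (1:ℝ) - eps ≠ 0) (hlam : lam ≠ 0)
    (hEL : eps + lam - 1 ≠ 0) (hqm1 : (1 - lam) * eps - 1 ≠ 0)
    (hD : (1:ℝ) - eps + lam * eps ≠ 0) :
    (d - (1 - lam) * eps * ((A * E - 1) / ((1 - lam) * eps - 1)))
      + (lam * eps ^ 2 + (1 - eps) * A * (E * eps)) / ((eps + lam - 1) * (1 - eps))
      + (-(lam * E * (A * (1 - lam))) - (1 - eps) * (1 - lam) ^ 2) / ((eps + lam - 1) * lam)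
    = d + eps / (1 - eps) + (1 - eps) * (1 - lam) / ((1 - eps + lam * eps) * lam)
        + A * E / (1 - eps + lam * eps) := by
  field_simp
  ring

set_option maxHeartbeats 2000000 in
theorem aoi_pmf_sums_to_one (lam eps : ℝ) (δ : ℕ) (P : ℕ → ℝ)
    (hl0 : 0 < lam) (hl1 : lam < 1) (he0 : 0 < eps) (he1 : eps < 1)
    (hne : lam + eps ≠ 1) (hδ : 1 ≤ δ)
    (β : ℝ)
    (hβ : β = δ + eps / (1 - eps)
        + (1 - eps) * (1 - lam) / ((1 - eps + lam * eps) * lam)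
        + (1 - lam) ^ δ * eps ^ δ / (1 - eps + lam * eps))
    (hP1 : ∀ j : ℕ, 1 ≤ j → j ≤ δ →
        P j = (1 / β) * (1 - (1 - lam) ^ j * eps ^ j))
    (hP2 : ∀ j : ℕ, δ < j →
        P j = (lam * eps ^ (j - δ + 1) - lam * eps ^ δ * (1 - lam) ^ j
              + (1 - eps) * (1 - lam) ^ δ * eps ^ j
              - (1 - eps) * (1 - lam) ^ (j - δ + 1)) / (β * (eps + lam - 1))) :
    ∑' j : ℕ, P (j + 1) = 1 := by
  have h1e : (0:ℝ) < 1 - eps := by linarith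
  have h1l : (0:ℝ) < 1 - lam := by linarith
  have hD : (0:ℝ) < 1 - eps + lam * eps := by nlinarith
  have hδ1 : (1:ℝ) ≤ (δ:ℝ) := by exact_mod_cast hδ
  have hβpos : 0 < β := by
    rw [hβ]
    have h2 : 0 < eps / (1 - eps) := div_pos he0 h1e
    have h3 : 0 < (1 - eps) * (1 - lam) / ((1 - eps + lam * eps) * lam) :=
      div_pos (by positivity) (by positivity)
    have h4 : 0 ≤ (1 - lam) ^ δ * eps ^ δ / (1 - eps + lam * eps) :=
      div_nonneg (by positivity) hD.le
    linarith
  have hβne : β ≠ 0 := hβpos.ne'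
  have hEL : eps + lam - 1 ≠ 0 := by
    intro h; apply hne; linarith
  set c1 : ℝ := (lam * eps ^ 2 + (1 - eps) * (1 - lam) ^ δ * eps ^ (δ + 1))
      / (β * (eps + lam - 1)) with hc1
  set c2 : ℝ := (-(lam * eps ^ δ * (1 - lam) ^ (δ + 1)) - (1 - eps) * (1 - lam) ^ 2)
      / (β * (eps + lam - 1)) with hc2
  have key : ∀ k : ℕ, P (k + δ + 1) = c1 * eps ^ k + c2 * (1 - lam) ^ k := by
    intro k
    rw [hP2 (k + δ + 1) (by omega), show k + δ + 1 - δ + 1 = k + 2 from by omega,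
      show k + δ + 1 = k + (δ + 1) from by omega, hc1, hc2]
    ring
  have hsg1 : Summable (fun k : ℕ => eps ^ k) :=
    summable_geometric_of_lt_one he0.le he1
  have hsg2 : Summable (fun k : ℕ => (1 - lam) ^ k) :=
    summable_geometric_of_lt_one h1l.le (by linarith)
  have hstail : Summable (fun k : ℕ => P (k + δ + 1)) := by
    apply Summable.congr ((hsg1.mul_left c1).add (hsg2.mul_left c2))
    intro k; exact (key k).symm
  have hsum : Summable (fun j : ℕ => P (j + 1)) := by
    exact (summable_nat_add_iff δ).1 hstail
  have hsplit := (Summable.sum_add_tsum_nat_add δ hsum).symm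
  rw [hsplit]
  have htail : ∑' k : ℕ, P (k + δ + 1) = c1 * (1 - eps)⁻¹ + c2 * lam⁻¹ := by
    rw [tsum_congr key, Summable.tsum_add (hsg1.mul_left c1) (hsg2.mul_left c2),
      tsum_mul_left, tsum_mul_left, tsum_geometric_of_lt_one he0.le he1,
      tsum_geometric_of_lt_one h1l.le (by linarith)]
    norm_num
  have hq : (1 - lam) * eps ≠ 1 := by nlinarith
  have hfin : ∑ i ∈ Finset.range δ, P (i + 1)
      = (1 / β) * ((δ:ℝ) - ((1 - lam) * eps) *
          ((((1 - lam) * eps) ^ δ - 1) / (((1 - lam) * eps) - 1))) := by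
    have e1 : ∀ i ∈ Finset.range δ, P (i + 1)
        = (1 / β) * (1 - ((1 - lam) * eps) ^ (i + 1)) := by
      intro i hi
      rw [hP1 (i + 1) (by omega) (by simp at hi; omega), mul_pow]
    rw [Finset.sum_congr rfl e1, ← Finset.mul_sum]
    congr 1
    rw [Finset.sum_sub_distrib, Finset.sum_const, Finset.card_range, nsmul_eq_mul,
      mul_one]
    congr 1
    have : ∀ i : ℕ, ((1 - lam) * eps) ^ (i + 1) = ((1 - lam) * eps) * ((1 - lam) * eps) ^ i := by
      intro i; ring
    simp_rw [this, ← Finset.mul_sum, geom_sum_eq hq]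
  rw [htail, hfin]
  have hqm1 : (1 - lam) * eps - 1 ≠ 0 := by
    intro h; exact hq (by linarith)
  rw [hc1, hc2, mul_pow]
  have haux : ((δ:ℝ) - (1 - lam) * eps * (((1 - lam) ^ δ * eps ^ δ - 1) / ((1 - lam) * eps - 1)))
      + (lam * eps ^ 2 + (1 - eps) * (1 - lam) ^ δ * (eps ^ δ * eps)) / ((eps + lam - 1) * (1 - eps))
      + (-(lam * eps ^ δ * ((1 - lam) ^ δ * (1 - lam))) - (1 - eps) * (1 - lam) ^ 2) / ((eps + lam - 1) * lam)
      = β := by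
    rw [hβ]
    exact aoi_aux lam eps (δ:ℝ) ((1 - lam) ^ δ) (eps ^ δ) h1e.ne' hl0.ne' hEL hqm1 hD.ne'
  apply mul_right_cancel₀ hβne
  rw [one_mul]
  conv_rhs => rw [← haux]
  field_simp
  ring
end

section
/- Under the hypotheses of the PMF in Lemma 1 (0 < lambda < 1, 0 < eps < 1, lambda + eps != 1, delta a positive integer, beta as defined), every P_j is nonnegative: P_j >= 0 for all j >= 1. -/
set_option maxHeartbeats 1000000


theorem aoi_pmf_nonneg (lam eps : ℝ) (δ : ℕ) (P : ℕ → ℝ)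
    (hl0 : 0 < lam) (hl1 : lam < 1) (he0 : 0 < eps) (he1 : eps < 1)
    (hne : lam + eps ≠ 1) (hδ : 1 ≤ δ)
    (β : ℝ)
    (hβ : β = δ + eps / (1 - eps)
        + (1 - eps) * (1 - lam) / ((1 - eps + lam * eps) * lam)
        + (1 - lam) ^ δ * eps ^ δ / (1 - eps + lam * eps))
    (hP1 : ∀ j : ℕ, 1 ≤ j → j ≤ δ →
        P j = (1 / β) * (1 - (1 - lam) ^ j * eps ^ j))
    (hP2 : ∀ j : ℕ, δ < j →
        P j = (lam * eps ^ (j - δ + 1) - lam * eps ^ δ * (1 - lam) ^ j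
              + (1 - eps) * (1 - lam) ^ δ * eps ^ j
              - (1 - eps) * (1 - lam) ^ (j - δ + 1)) / (β * (eps + lam - 1))) :
    ∀ j : ℕ, 1 ≤ j → 0 ≤ P j := by
  have h1 : 0 < 1 - eps := by linarith
  have h2 : 0 < 1 - lam := by linarith
  have h3 : 0 < 1 - eps + lam * eps := by nlinarith
  have tA : (1 : ℝ) ≤ (δ : ℝ) := by exact_mod_cast hδ
  have tB : 0 < eps / (1 - eps) := div_pos he0 h1
  have tC : 0 < (1 - eps) * (1 - lam) / ((1 - eps + lam * eps) * lam) :=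
    div_pos (mul_pos h1 h2) (mul_pos h3 hl0)
  have tD : 0 < (1 - lam) ^ δ * eps ^ δ / (1 - eps + lam * eps) :=
    div_pos (mul_pos (pow_pos h2 δ) (pow_pos he0 δ)) h3
  have hβpos : 0 < β := by rw [hβ]; linarith
  intro j hj
  by_cases hle : j ≤ δ
  · rw [hP1 j hj hle]
    have hmp : (1 - lam) ^ j * eps ^ j = ((1 - lam) * eps) ^ j := (mul_pow _ _ _).symm
    have hle1 : ((1 - lam) * eps) ^ j ≤ 1 :=
      pow_le_one₀ (by positivity) (by nlinarith)
    apply mul_nonneg (by positivity)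
    rw [hmp]; linarith
  · push_neg at hle
    rw [hP2 j hle]
    set b := 1 - lam with hb
    set d := eps + lam - 1 with hd
    have hdne : d ≠ 0 := by
      intro h; apply hne; rw [hd] at h; linarith
    obtain ⟨k, hk, rfl⟩ : ∃ k, 1 ≤ k ∧ j = δ + k := ⟨j - δ, by omega, by omega⟩
    have hsub : δ + k - δ + 1 = k + 1 := by omega
    rw [hsub]
    have hpow1 : eps ^ (δ + k) = eps ^ δ * eps ^ k := pow_add eps δ k
    have hpow2 : b ^ (δ + k) = b ^ δ * b ^ k := pow_add b δ k
    have hpow3 : eps ^ (k + 1) = eps ^ k * eps := pow_succ eps k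
    have hpow4 : b ^ (k + 1) = b ^ k * b := pow_succ b k
    set E := eps ^ δ with hE
    set B := b ^ δ with hB
    set X := eps ^ k with hX
    set Y := b ^ k with hY
    -- the numerator
    set N := lam * eps ^ (k + 1) - lam * E * b ^ (δ + k) + (1 - eps) * B * eps ^ (δ + k)
        - (1 - eps) * b ^ (k + 1) with hN
    have key : N * d = d ^ 2 * (1 - E * B) * Y + (eps * (1 - b) + E * B * (1 - eps)) * (d * (X - Y)) := by
      rw [hN, hpow1, hpow2, hpow3, hpow4, hd, hb]; ring
    have hEB : E * B ≤ 1 := by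
      rw [hE, hB]
      calc eps ^ δ * b ^ δ = (eps * b) ^ δ := (mul_pow _ _ _).symm
        _ ≤ 1 ^ δ := pow_le_pow_left₀ (by positivity) (by rw [hb]; nlinarith) δ
        _ = 1 := one_pow δ
    have hsign : 0 ≤ d * (X - Y) := by
      rcases le_total b eps with h | h
      · have hd0 : 0 ≤ d := by rw [hb] at h; rw [hd]; linarith
        have : Y ≤ X := pow_le_pow_left₀ (le_of_lt h2) h k
        exact mul_nonneg hd0 (by linarith)
      · have hd0 : d ≤ 0 := by rw [hb] at h; rw [hd]; linarith
        have : X ≤ Y := pow_le_pow_left₀ (le_of_lt he0) h k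
        nlinarith
    have hQ : 0 ≤ N * d := by
      rw [key]
      have hYpos : 0 ≤ Y := by rw [hY]; positivity
      have hc : 0 ≤ eps * (1 - b) + E * B * (1 - eps) := by
        have : 0 ≤ E * B := by rw [hE, hB]; positivity
        rw [hb]
        nlinarith [mul_pos he0 hl0, mul_nonneg this (le_of_lt h1)]
      have : 0 ≤ d ^ 2 * (1 - E * B) * Y := by
        apply mul_nonneg (mul_nonneg (sq_nonneg d) (by linarith)) hYpos
      exact add_nonneg this (mul_nonneg hc hsign)
    have heq : N / (β * d) = (N * d) / (β * d * d) :=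
      (mul_div_mul_right N (β * d) hdne).symm
    rw [heq]
    apply div_nonneg hQ
    have : β * d * d = β * (d * d) := by ring
    rw [this]
    exact mul_nonneg (le_of_lt hβpos) (mul_self_nonneg d)
end

section
/- Let 0 < lambda < 1, 0 < eps < 1, lambda + eps != 1, delta a positive integer, and beta as in Lemma 1. Then the tail sum of the AoI PMF satisfies sum_{j=delta}^infinity P_j = (1-eps+lambda*eps)/(lambda*(1-eps)*beta). -/
theorem aoi_pmf_tail_sum (lam eps : ℝ) (δ : ℕ) (P : ℕ → ℝ)
    (hl0 : 0 < lam) (hl1 : lam < 1) (he0 : 0 < eps) (he1 : eps < 1)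
    (hne : lam + eps ≠ 1) (hδ : 1 ≤ δ)
    (β : ℝ)
    (hβ : β = δ + eps / (1 - eps)
        + (1 - eps) * (1 - lam) / ((1 - eps + lam * eps) * lam)
        + (1 - lam) ^ δ * eps ^ δ / (1 - eps + lam * eps))
    (hP1 : ∀ j : ℕ, 1 ≤ j → j ≤ δ →
        P j = (1 / β) * (1 - (1 - lam) ^ j * eps ^ j))
    (hP2 : ∀ j : ℕ, δ < j →
        P j = (lam * eps ^ (j - δ + 1) - lam * eps ^ δ * (1 - lam) ^ j
              + (1 - eps) * (1 - lam) ^ δ * eps ^ j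
              - (1 - eps) * (1 - lam) ^ (j - δ + 1)) / (β * (eps + lam - 1))) :
    ∑' k : ℕ, P (δ + k) = (1 - eps + lam * eps) / (lam * (1 - eps) * β) := by
  have h1e : (0:ℝ) < 1 - eps := by linarith
  have h1l : (0:ℝ) < 1 - lam := by linarith
  have h2 : (0:ℝ) < 1 - eps + lam * eps := by nlinarith
  have hβ0 : 0 < β := by
    have ha : (0:ℝ) < eps / (1 - eps) := div_pos he0 h1e
    have hb : (0:ℝ) < (1 - eps) * (1 - lam) / ((1 - eps + lam * eps) * lam) :=
      div_pos (mul_pos h1e h1l) (mul_pos h2 hl0)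
    have hc : (0:ℝ) ≤ (1 - lam) ^ δ * eps ^ δ / (1 - eps + lam * eps) := by positivity
    have hd : (1:ℝ) ≤ (δ:ℝ) := by exact_mod_cast hδ
    rw [hβ]; linarith
  have hβne : β ≠ 0 := ne_of_gt hβ0
  have hden : eps + lam - 1 ≠ 0 := by
    intro h; apply hne; linarith
  set A := (lam * eps + (1 - eps) * (1 - lam) ^ δ * eps ^ δ) / (β * (eps + lam - 1)) with hA
  set B := (-(lam * eps ^ δ * (1 - lam) ^ δ) - (1 - eps) * (1 - lam)) / (β * (eps + lam - 1)) with hB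
  have hf : ∀ k : ℕ, P (δ + k)
      = (A * eps ^ k + B * (1 - lam) ^ k) + (if k = 0 then P δ - (A + B) else 0) := by
    intro k
    cases k with
    | zero => simp
    | succ n =>
      simp only [Nat.succ_ne_zero, if_false, add_zero]
      rw [hP2 (δ + (n + 1)) (by omega)]
      have hidx : δ + (n + 1) - δ + 1 = n + 2 := by omega
      rw [hidx, hA, hB]
      have hβd : β * (eps + lam - 1) ≠ 0 := mul_ne_zero hβne hden
      field_simp
      ring
  have hse : Summable (fun k : ℕ => A * eps ^ k) :=
    (summable_geometric_of_lt_one he0.le he1).mul_left A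
  have hsl : Summable (fun k : ℕ => B * (1 - lam) ^ k) :=
    (summable_geometric_of_lt_one h1l.le (by linarith)).mul_left B
  have hs1 : Summable (fun k : ℕ => A * eps ^ k + B * (1 - lam) ^ k) := hse.add hsl
  have hs2 : Summable (fun k : ℕ => if k = 0 then P δ - (A + B) else 0) :=
    summable_of_ne_finset_zero (s := {0}) (fun k hk => if_neg (by simpa using hk))
  have ht2 : (∑' k : ℕ, if k = 0 then P δ - (A + B) else 0) = P δ - (A + B) := by
    rw [tsum_eq_single 0 (fun k hk => if_neg hk)]; simp
  calc ∑' k : ℕ, P (δ + k)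
      = ∑' k : ℕ, ((A * eps ^ k + B * (1 - lam) ^ k)
          + (if k = 0 then P δ - (A + B) else 0)) := tsum_congr hf
    _ = (∑' k : ℕ, (A * eps ^ k + B * (1 - lam) ^ k))
          + ∑' k : ℕ, (if k = 0 then P δ - (A + B) else 0) := Summable.tsum_add hs1 hs2
    _ = (A * (1 - eps)⁻¹ + B * (1 - (1 - lam))⁻¹) + (P δ - (A + B)) := by
        rw [ht2, Summable.tsum_add hse hsl, tsum_mul_left, tsum_mul_left,
          tsum_geometric_of_lt_one he0.le he1,
          tsum_geometric_of_lt_one h1l.le (by linarith)]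
    _ = (1 - eps + lam * eps) / (lam * (1 - eps) * β) := by
        rw [hP1 δ hδ le_rfl, hA, hB]
        have : (1 : ℝ) - (1 - lam) = lam := by ring
        rw [this]
        field_simp
        ring
end
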